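/- Define, for c ≥ 2/√3, h₁(c) = ∫_{π/3}^{2π/3} (1 − R⁻(c·sin ψ)²)⁻¹ dψ, h₃(c) = ∫_{π/3}^{2π/3} (R⁺(c·sin ψ)² − 1)⁻¹ dψ, and h₂(c) = ∫_{R⁻((√3/2)c)}^{R⁺((√3/2)c)} K(R)/(R·√(c² − K(R)²)) dR. Then lim_{c→∞} h₁(c) = π/3, lim_{c→∞} h₂(c) = π/3, and lim_{c→∞} h₃(c) = 0. -/

import Mathlib

/-!
Since `R · K(R) = exp((R² - 1)/2)`, we get `R⁻(x) ≤ 1/x` and `R⁺(x)² ≥ 1 + 2 log x`. As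
`c sin ψ ≥ (√3/2) c` on `[π/3, 2π/3]`, the integrands of `h₁` and `h₃` tend to `1` and `0`
uniformly in `ψ`.

For `h₂`, the integrand `g` satisfies `g · (R² - 1) = d/dR arcsin (K R / c)`, a function equal
to `π/3` at both endpoints and to `arcsin (1/c)` at `R = 1`. Comparing `g` with this derivative
gives `∫ g ≥ π/3 - arcsin (1/c)` over `[R⁻, 1]`, and bounds the contributions of `[R⁻, r₀]` and
`[r₁, R⁺]` by `(1 - r₀²)⁻¹ π/3` and `(r₁² - 1)⁻¹ π/3`; on the fixed interval `[r₀, r₁]` the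
integrand is `O(1/c)`.
-/

open Real Filter

noncomputable def K (R : ℝ) : ℝ := Real.exp ((R ^ 2 - 1) / 2) / R

open MeasureTheory Set Topology

lemma K_pos {R : ℝ} (hR : 0 < R) : 0 < K R := div_pos (exp_pos _) hR

lemma K_one : K 1 = 1 := by simp [K]

lemma log_K {R : ℝ} (hR : 0 < R) : log (K R) = (R ^ 2 - 1) / 2 - log R := by
  rw [K, log_div (exp_pos _).ne' hR.ne', log_exp]

lemma hasDerivAt_K {R : ℝ} (hR : R ≠ 0) : HasDerivAt K (K R * (R ^ 2 - 1) / R) R := by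
  have hexp : HasDerivAt (fun R : ℝ => exp ((R ^ 2 - 1) / 2)) (exp ((R ^ 2 - 1) / 2) * R) R := by
    have := (((hasDerivAt_pow 2 R).sub_const 1).div_const 2).exp
    convert this using 1
    ring
  refine (hexp.div (hasDerivAt_id' R) hR).congr_deriv ?_
  unfold K
  field_simp

lemma continuousOn_K : ContinuousOn K (Ioi 0) :=
  fun _ hR => (hasDerivAt_K (ne_of_gt hR)).continuousAt.continuousWithinAt

lemma strictAntiOn_K : StrictAntiOn K (Ioc 0 1) := by
  refine strictAntiOn_of_deriv_neg (convex_Ioc 0 1) (continuousOn_K.mono Ioc_subset_Ioi_self)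
    fun R hR => ?_
  rw [interior_Ioc] at hR
  rw [(hasDerivAt_K hR.1.ne').deriv]
  have : R ^ 2 - 1 < 0 := by nlinarith [hR.1, hR.2]
  exact div_neg_of_neg_of_pos (mul_neg_of_pos_of_neg (K_pos hR.1) this) hR.1

lemma strictMonoOn_K : StrictMonoOn K (Ici 1) := by
  refine strictMonoOn_of_deriv_pos (convex_Ici 1)
    (continuousOn_K.mono fun R (hR : 1 ≤ R) => zero_lt_one.trans_le hR) fun R hR => ?_
  rw [interior_Ici, mem_Ioi] at hR
  rw [(hasDerivAt_K (by positivity)).deriv]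
  have : 0 < R ^ 2 - 1 := by nlinarith
  have := K_pos (zero_lt_one.trans hR)
  positivity

lemma K_le_max {r₀ r₁ R : ℝ} (hr₀ : 0 < r₀) (hR : R ∈ Icc r₀ r₁) : K R ≤ max (K r₀) (K r₁) := by
  rcases le_total R 1 with h | h
  · exact le_max_of_le_left <|
      strictAntiOn_K.antitoneOn ⟨hr₀, hR.1.trans h⟩ ⟨hr₀.trans_le hR.1, h⟩ hR.1
  · exact le_max_of_le_right <| strictMonoOn_K.monotoneOn h (h.trans hR.2) hR.2

lemma mul_K_le_one {R : ℝ} (hR₀ : 0 < R) (hR₁ : R ≤ 1) : R * K R ≤ 1 := by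
  rw [K, mul_div_cancel₀ _ hR₀.ne', exp_le_one_iff]
  nlinarith

lemma two_log_K_le {R : ℝ} (hR : 1 ≤ R) : 2 * log (K R) ≤ R ^ 2 - 1 := by
  rw [log_K (zero_lt_one.trans_le hR)]
  linarith [log_nonneg hR]

lemma sqrt_three_div_two_le_sin {ψ : ℝ} (hψ : ψ ∈ Icc (π / 3) (2 * π / 3)) : √3 / 2 ≤ sin ψ := by
  have hdist : |π / 2 - ψ| ≤ π / 6 := abs_le.2 ⟨by linarith [hψ.2], by linarith [hψ.1]⟩
  rw [← cos_pi_div_two_sub, ← cos_abs, ← cos_pi_div_six]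
  exact cos_le_cos_of_nonneg_of_le_pi (abs_nonneg _) (by linarith [pi_pos]) hdist

lemma integral_comp_mul_sin_mem_Icc {φ : ℝ → ℝ} {c : ℝ} (hc : 0 ≤ c)
    (hφ : AntitoneOn φ (Ici (√3 / 2 * c))) :
    ∫ ψ in (π / 3)..(2 * π / 3), φ (c * sin ψ) ∈ Icc (π / 3 * φ c) (π / 3 * φ (√3 / 2 * c)) := by
  set t := √3 / 2 * c
  have hψ : π / 3 ≤ 2 * π / 3 := by linarith [pi_pos]
  have htc : t ≤ c := mul_le_of_le_one_left hc (by nlinarith [sq_sqrt (zero_le_three (α := ℝ))])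
  -- `φ (max · t)` is antitone on all of `ℝ`, hence measurable, and agrees with `φ` where needed.
  set φ' : ℝ → ℝ := fun x => φ (max x t)
  have hφ' : Antitone φ' := fun x y hxy =>
    hφ (le_max_right x t) (le_max_right y t) (max_le_max_right t hxy)
  have hφ'_mem : ∀ ψ, φ' (c * sin ψ) ∈ Icc (φ c) (φ t) := fun ψ =>
    have hmax : max (c * sin ψ) t ≤ c := max_le (mul_le_of_le_one_right hc (sin_le_one ψ)) htc
    ⟨hφ (le_max_right _ t) htc hmax, hφ (le_refl t) (le_max_right _ t) (le_max_right _ t)⟩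
  have hEq : EqOn (fun ψ => φ' (c * sin ψ)) (fun ψ => φ (c * sin ψ)) (Icc (π / 3) (2 * π / 3)) :=
    fun ψ hψ => by
      have : t ≤ c * sin ψ := by
        rw [mul_comm c]
        exact mul_le_mul_of_nonneg_right (sqrt_three_div_two_le_sin hψ) hc
      simp only [φ', max_eq_left this]
  have hint : IntervalIntegrable (fun ψ => φ (c * sin ψ)) volume (π / 3) (2 * π / 3) := by
    refine (intervalIntegrable_iff_integrableOn_Icc_of_le hψ).2 <|
      IntegrableOn.congr_fun ?_ hEq measurableSet_Icc
    refine Measure.integrableOn_of_bounded (M := |φ c| + |φ t|) (by simp)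
      (hφ'.measurable.comp (by fun_prop)).aestronglyMeasurable (Eventually.of_forall fun ψ => ?_)
    obtain ⟨h₁, h₂⟩ := hφ'_mem ψ
    simp only [norm_eq_abs, abs_le]
    constructor <;> linarith [neg_abs_le (φ c), le_abs_self (φ t), abs_nonneg (φ c),
      abs_nonneg (φ t)]
  have hbound : ∀ ψ ∈ Icc (π / 3) (2 * π / 3), (fun ψ => φ (c * sin ψ)) ψ ∈ Icc (φ c) (φ t) :=
    fun ψ hψ => hEq hψ ▸ hφ'_mem ψ
  constructor
  · have := intervalIntegral.integral_mono_on hψ intervalIntegrable_const hint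
      fun ψ hψ => (hbound ψ hψ).1
    rw [intervalIntegral.integral_const, smul_eq_mul] at this
    linarith
  · have := intervalIntegral.integral_mono_on hψ hint intervalIntegrable_const
      fun ψ hψ => (hbound ψ hψ).2
    rw [intervalIntegral.integral_const, smul_eq_mul] at this
    linarith

lemma tendsto_integral_comp_mul_sin {φ : ℝ → ℝ} {x₀ L : ℝ} (hφ : AntitoneOn φ (Ioi x₀))
    (hL : Tendsto φ atTop (𝓝 L)) :
    Tendsto (fun c => ∫ ψ in (π / 3)..(2 * π / 3), φ (c * sin ψ)) atTop (𝓝 (π / 3 * L)) := by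
  have ht : Tendsto (fun c : ℝ => √3 / 2 * c) atTop atTop :=
    tendsto_id.const_mul_atTop (by positivity)
  have hbounds : ∀ᶠ c in atTop,
      ∫ ψ in (π / 3)..(2 * π / 3), φ (c * sin ψ) ∈ Icc (π / 3 * φ c) (π / 3 * φ (√3 / 2 * c)) := by
    filter_upwards [eventually_ge_atTop 0, ht.eventually_gt_atTop x₀] with c hc hcx
    exact integral_comp_mul_sin_mem_Icc hc (hφ.mono fun x hx => hcx.trans_le hx)
  exact tendsto_of_tendsto_of_tendsto_of_le_of_le' (hL.const_mul _) ((hL.comp ht).const_mul _)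
    (hbounds.mono fun _ h => h.1) (hbounds.mono fun _ h => h.2)

lemma integral_le_mul_sub_of_le_mul_deriv {f F F' : ℝ → ℝ} {a b C : ℝ} (hab : a ≤ b)
    (hF : ∀ x ∈ Icc a b, HasDerivAt F (F' x) x) (hf : IntervalIntegrable f volume a b)
    (hle : ∀ x ∈ Ioo a b, f x ≤ C * F' x) : ∫ x in a..b, f x ≤ C * (F b - F a) := by
  rw [mul_sub]
  exact intervalIntegral.integral_le_sub_of_hasDeriv_right_of_le hab
    (fun x hx => ((hF x hx).continuousAt.const_mul C).continuousWithinAt)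
    (fun x hx => ((hF x (Ioo_subset_Icc_self hx)).const_mul C).hasDerivWithinAt)
    ((intervalIntegrable_iff_integrableOn_Icc_of_le hab).1 hf) hle

/-- The integrand of `h₂(c)`: `|dθ/dR|` along the arc `DA` of the trajectory `K(R) = c sin ψ`. -/
noncomputable def angleDensity (c R : ℝ) : ℝ := K R / (R * √(c ^ 2 - K R ^ 2))

lemma angleDensity_nonneg {c R : ℝ} (hR : 0 < R) : 0 ≤ angleDensity c R :=
  div_nonneg (K_pos hR).le (mul_nonneg hR.le (sqrt_nonneg _))

lemma hasDerivAt_arcsin_K_div {c R : ℝ} (hR : 0 < R) (hKc : K R < c) :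
    HasDerivAt (fun r => arcsin (K r / c)) (angleDensity c R * (R ^ 2 - 1)) R := by
  have hK := K_pos hR
  have hc : 0 < c := hK.trans hKc
  have hlt : K R / c < 1 := (div_lt_one hc).2 hKc
  refine ((hasDerivAt_arcsin (by linarith [div_pos hK hc]) hlt.ne).comp R
    ((hasDerivAt_K hR.ne').div_const c)).congr_deriv ?_
  have hsub : 0 < c ^ 2 - K R ^ 2 := by nlinarith
  have hsqrt : √(1 - (K R / c) ^ 2) = √(c ^ 2 - K R ^ 2) / c := by
    rw [show 1 - (K R / c) ^ 2 = (c ^ 2 - K R ^ 2) / c ^ 2 by field_simp,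
      sqrt_div hsub.le, sqrt_sq hc.le]
  have := sqrt_pos.2 hsub
  rw [hsqrt, angleDensity]
  field_simp

lemma arcsin_sqrt_three_div_two : arcsin (√3 / 2) = π / 3 := by
  rw [← sin_pi_div_three, arcsin_sin (by linarith [pi_pos]) (by linarith [pi_pos])]

lemma arcsin_K_div_eq_pi_div_three {c R : ℝ} (hR₀ : 0 < R) (hR : K R = √3 / 2 * c) :
    arcsin (K R / c) = π / 3 := by
  have hc : c ≠ 0 := by
    rintro rfl
    simpa [hR] using K_pos hR₀
  rw [hR, mul_div_assoc, div_self hc, mul_one, arcsin_sqrt_three_div_two]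

section ArcDA

variable {c ρ P : ℝ} (hρ : 0 < ρ) (hKρ : K ρ = √3 / 2 * c) (hKP : K P = √3 / 2 * c)
include hρ hKρ hKP

lemma K_lt_and_half_le_sqrt {R : ℝ} (hR : R ∈ Icc ρ P) :
    K R < c ∧ c / 2 ≤ √(c ^ 2 - K R ^ 2) := by
  have hK := K_pos (hρ.trans_le hR.1)
  have hKa : K R ≤ √3 / 2 * c := by simpa [hKρ, hKP] using K_le_max hρ hR
  have h3 := sq_sqrt (zero_le_three (α := ℝ))
  have hc : 0 < c := by nlinarith [sqrt_nonneg 3]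
  have h2 : √3 < 2 := by nlinarith [sqrt_nonneg 3]
  refine ⟨hKa.trans_lt (by nlinarith), ?_⟩
  rw [le_sqrt (by positivity) (by nlinarith)]
  nlinarith

lemma hasDerivAt_arcsin_K_div_of_mem {R : ℝ} (hR : R ∈ Icc ρ P) :
    HasDerivAt (fun r => arcsin (K r / c)) (angleDensity c R * (R ^ 2 - 1)) R :=
  hasDerivAt_arcsin_K_div (hρ.trans_le hR.1) (K_lt_and_half_le_sqrt hρ hKρ hKP hR).1

lemma arcsin_K_div_nonneg {R : ℝ} (hR : R ∈ Icc ρ P) : 0 ≤ arcsin (K R / c) := by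
  have hR₀ := hρ.trans_le hR.1
  have hc := (K_pos hR₀).trans (K_lt_and_half_le_sqrt hρ hKρ hKP hR).1
  exact arcsin_nonneg.2 (div_nonneg (K_pos hR₀).le hc.le)

lemma intervalIntegrable_angleDensity {s t : ℝ} (hs : ρ ≤ s) (hst : s ≤ t) (ht : t ≤ P) :
    IntervalIntegrable (angleDensity c) volume s t := by
  refine ContinuousOn.intervalIntegrable_of_Icc hst fun R hR => ?_
  have hR' : R ∈ Icc ρ P := ⟨hs.trans hR.1, hR.2.trans ht⟩
  have hR₀ : 0 < R := hρ.trans_le hR'.1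
  obtain ⟨hKc, hsqrt⟩ := K_lt_and_half_le_sqrt hρ hKρ hKP hR'
  have hc : 0 < c := (K_pos hR₀).trans hKc
  have hKcont := (hasDerivAt_K hR₀.ne').continuousAt
  exact (hKcont.div (continuousAt_id.mul ((hKcont.pow 2).const_sub _).sqrt)
    (mul_pos hR₀ ((half_pos hc).trans_le hsqrt)).ne').continuousWithinAt

lemma pi_div_three_sub_arcsin_inv_le_integral (hρ₁ : ρ ≤ 1) (hP₁ : 1 ≤ P) :
    π / 3 - arcsin c⁻¹ ≤ ∫ R in ρ..P, angleDensity c R := by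
  have hleft : ∫ R in ρ..1, -angleDensity c R ≤ 1 * (arcsin (K 1 / c) - arcsin (K ρ / c)) :=
    integral_le_mul_sub_of_le_mul_deriv hρ₁
      (fun R hR => hasDerivAt_arcsin_K_div_of_mem hρ hKρ hKP ⟨hR.1, hR.2.trans hP₁⟩)
      (intervalIntegrable_angleDensity hρ hKρ hKP le_rfl hρ₁ hP₁).neg fun R hR => by
        have := angleDensity_nonneg (c := c) (hρ.trans hR.1)
        nlinarith [sq_nonneg R]
  have hright : 0 ≤ ∫ R in (1 : ℝ)..P, angleDensity c R :=
    intervalIntegral.integral_nonneg hP₁ fun R hR => angleDensity_nonneg (by linarith [hR.1])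
  rw [intervalIntegral.integral_neg, K_one, one_div,
    arcsin_K_div_eq_pi_div_three hρ hKρ] at hleft
  rw [← intervalIntegral.integral_add_adjacent_intervals
    (intervalIntegrable_angleDensity hρ hKρ hKP le_rfl hρ₁ hP₁)
    (intervalIntegrable_angleDensity hρ hKρ hKP hρ₁ hP₁ le_rfl)]
  linarith

lemma integral_angleDensity_le_of_lt_one {r₀ : ℝ} (hρr₀ : ρ ≤ r₀) (hr₀ : r₀ < 1)
    (hr₀P : r₀ ≤ P) :
    ∫ R in ρ..r₀, angleDensity c R ≤ (1 - r₀ ^ 2)⁻¹ * (π / 3) := by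
  have hw : 0 < 1 - r₀ ^ 2 := by nlinarith
  have h := integral_le_mul_sub_of_le_mul_deriv (C := -(1 - r₀ ^ 2)⁻¹) hρr₀
    (fun R hR => hasDerivAt_arcsin_K_div_of_mem hρ hKρ hKP ⟨hR.1, hR.2.trans hr₀P⟩)
    (intervalIntegrable_angleDensity hρ hKρ hKP le_rfl hρr₀ hr₀P) fun R hR => by
      have hR₀ := hρ.trans hR.1
      have := angleDensity_nonneg (c := c) hR₀
      rw [neg_mul, ← mul_neg, neg_mul_eq_mul_neg, neg_sub, le_inv_mul_iff₀ hw]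
      nlinarith [mul_le_mul_of_nonneg_left (pow_le_pow_left₀ hR₀.le hR.2.le 2) this]
  have hF₀ : 0 ≤ arcsin (K r₀ / c) := arcsin_K_div_nonneg hρ hKρ hKP ⟨hρr₀, hr₀P⟩
  rw [arcsin_K_div_eq_pi_div_three hρ hKρ, neg_mul, ← mul_neg, neg_sub] at h
  exact h.trans (mul_le_mul_of_nonneg_left (by linarith) (inv_pos.2 hw).le)

lemma integral_angleDensity_le_of_one_lt {r₁ : ℝ} (hρr₁ : ρ ≤ r₁) (hr₁ : 1 < r₁)
    (hr₁P : r₁ ≤ P) :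
    ∫ R in r₁..P, angleDensity c R ≤ (r₁ ^ 2 - 1)⁻¹ * (π / 3) := by
  have hw : 0 < r₁ ^ 2 - 1 := by nlinarith
  have h := integral_le_mul_sub_of_le_mul_deriv (C := (r₁ ^ 2 - 1)⁻¹) hr₁P
    (fun R hR => hasDerivAt_arcsin_K_div_of_mem hρ hKρ hKP ⟨hρr₁.trans hR.1, hR.2⟩)
    (intervalIntegrable_angleDensity hρ hKρ hKP hρr₁ hr₁P le_rfl) fun R hR => by
      have hR₀ : 0 < R := by linarith [hR.1]
      have := angleDensity_nonneg (c := c) hR₀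
      rw [le_inv_mul_iff₀ hw]
      nlinarith [mul_le_mul_of_nonneg_left (pow_le_pow_left₀ (by linarith) hR.1.le 2) this]
  have hF₁ : 0 ≤ arcsin (K r₁ / c) := arcsin_K_div_nonneg hρ hKρ hKP ⟨hρr₁, hr₁P⟩
  rw [arcsin_K_div_eq_pi_div_three (by linarith) hKP] at h
  exact h.trans (mul_le_mul_of_nonneg_left (by linarith) (inv_pos.2 hw).le)

lemma integral_angleDensity_le_of_mem_Icc {r₀ r₁ : ℝ} (hρr₀ : ρ ≤ r₀) (hr₀r₁ : r₀ ≤ r₁)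
    (hr₁P : r₁ ≤ P) :
    ∫ R in r₀..r₁, angleDensity c R ≤ (r₁ - r₀) * (2 * max (K r₀) (K r₁) / (r₀ * c)) := by
  have hr₀ := hρ.trans_le hρr₀
  have hc := (K_pos hr₀).trans (K_lt_and_half_le_sqrt hρ hKρ hKP ⟨hρr₀, hr₀r₁.trans hr₁P⟩).1
  have h := intervalIntegral.integral_mono_on hr₀r₁
    (intervalIntegrable_angleDensity hρ hKρ hKP hρr₀ hr₀r₁ hr₁P) intervalIntegrable_const
    fun R hR => show angleDensity c R ≤ 2 * max (K r₀) (K r₁) / (r₀ * c) from calc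
      angleDensity c R ≤ max (K r₀) (K r₁) / (r₀ * (c / 2)) :=
        div_le_div₀ ((K_pos hr₀).le.trans (le_max_left _ _)) (K_le_max hr₀ hR) (by positivity)
          (mul_le_mul hR.1 (K_lt_and_half_le_sqrt hρ hKρ hKP ⟨hρr₀.trans hR.1, hR.2.trans hr₁P⟩).2
            (by positivity) (hr₀.trans_le hR.1).le)
      _ = 2 * max (K r₀) (K r₁) / (r₀ * c) := by field_simp
  rwa [intervalIntegral.integral_const, smul_eq_mul] at h

lemma integral_angleDensity_le {r₀ r₁ : ℝ} (hρr₀ : ρ ≤ r₀) (hr₀ : r₀ < 1) (hr₁ : 1 < r₁)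
    (hr₁P : r₁ ≤ P) :
    ∫ R in ρ..P, angleDensity c R ≤ (1 - r₀ ^ 2)⁻¹ * (π / 3)
      + (r₁ - r₀) * (2 * max (K r₀) (K r₁) / (r₀ * c)) + (r₁ ^ 2 - 1)⁻¹ * (π / 3) := by
  have hr₀r₁ : r₀ ≤ r₁ := by linarith
  rw [← intervalIntegral.integral_add_adjacent_intervals
      (intervalIntegrable_angleDensity hρ hKρ hKP le_rfl hρr₀ (hr₀r₁.trans hr₁P))
      (intervalIntegrable_angleDensity hρ hKρ hKP hρr₀ (hr₀r₁.trans hr₁P) le_rfl),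
    ← intervalIntegral.integral_add_adjacent_intervals
      (intervalIntegrable_angleDensity hρ hKρ hKP hρr₀ hr₀r₁ hr₁P)
      (intervalIntegrable_angleDensity hρ hKρ hKP (hρr₀.trans hr₀r₁) hr₁P le_rfl)]
  linarith [integral_angleDensity_le_of_lt_one hρ hKρ hKP hρr₀ hr₀ (hr₀r₁.trans hr₁P),
    integral_angleDensity_le_of_mem_Icc hρ hKρ hKP hρr₀ hr₀r₁ hr₁P,
    integral_angleDensity_le_of_one_lt hρ hKρ hKP (hρr₀.trans hr₀r₁) hr₁ hr₁P]

end ArcDA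

lemma exists_inv_one_sub_sq_add_inv_sq_sub_one_lt {δ : ℝ} (hδ : 0 < δ) :
    ∃ r₀ r₁ : ℝ, r₀ ∈ Ioo 0 1 ∧ 1 < r₁ ∧
      (1 - r₀ ^ 2)⁻¹ * (π / 3) + (r₁ ^ 2 - 1)⁻¹ * (π / 3) < π / 3 + δ := by
  have h₀ : ∀ᶠ r in 𝓝 0, (1 - r ^ 2)⁻¹ * (π / 3) < π / 3 + δ / 2 := by
    have : ContinuousAt (fun r : ℝ => (1 - r ^ 2)⁻¹ * (π / 3)) 0 := by
      fun_prop (disch := norm_num)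
    exact this.tendsto.eventually <| gt_mem_nhds <| by norm_num; linarith
  have h₁ : Tendsto (fun r : ℝ => (r ^ 2 - 1)⁻¹ * (π / 3)) atTop (𝓝 0) := by
    rw [← zero_mul (π / 3)]
    exact (tendsto_inv_atTop_zero.comp <|
      tendsto_atTop_add_const_right _ _ (tendsto_pow_atTop two_ne_zero)).mul_const _
  obtain ⟨r₀, hr₀, hr₀₁⟩ :=
    ((h₀.filter_mono nhdsWithin_le_nhds).and (Ioo_mem_nhdsGT one_pos)).exists
  obtain ⟨r₁, hr₁, hr₁₁⟩ :=
    ((h₁.eventually (gt_mem_nhds (half_pos hδ))).and (eventually_gt_atTop 1)).exists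
  exact ⟨r₀, r₁, hr₀₁, hr₁₁, by linarith⟩

section Branches

variable {Rm Rp : ℝ → ℝ}
  (hRm : ∀ x : ℝ, 1 < x → 0 < Rm x ∧ Rm x < 1 ∧ K (Rm x) = x)
  (hRp : ∀ x : ℝ, 1 < x → 1 < Rp x ∧ K (Rp x) = x)

include hRm in
lemma antitoneOn_of_K_eq : AntitoneOn Rm (Ioi 1) := by
  intro x hx y hy hxy
  obtain ⟨hx₀, hx₁, hKx⟩ := hRm x hx
  obtain ⟨hy₀, hy₁, hKy⟩ := hRm y hy
  exact (strictAntiOn_K.le_iff_ge ⟨hx₀, hx₁.le⟩ ⟨hy₀, hy₁.le⟩).1 (by rwa [hKx, hKy])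

include hRp in
lemma monotoneOn_of_K_eq : MonotoneOn Rp (Ioi 1) := by
  intro x hx y hy hxy
  obtain ⟨hx₁, hKx⟩ := hRp x hx
  obtain ⟨hy₁, hKy⟩ := hRp y hy
  exact (strictMonoOn_K.le_iff_le hx₁.le hy₁.le).1 (by rwa [hKx, hKy])

include hRm in
lemma tendsto_nhds_zero_of_K_eq : Tendsto Rm atTop (𝓝 0) := by
  refine tendsto_of_tendsto_of_tendsto_of_le_of_le' tendsto_const_nhds tendsto_inv_atTop_zero
    ?_ ?_ <;> filter_upwards [eventually_gt_atTop 1] with x hx <;> obtain ⟨h₀, h₁, hK⟩ := hRm x hx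
  · exact h₀.le
  · have := mul_K_le_one h₀ h₁.le
    rw [hK] at this
    rw [le_inv_comm₀ h₀ (zero_lt_one.trans hx), inv_eq_one_div, le_div_iff₀ h₀]
    linarith

include hRp in
lemma tendsto_atTop_of_K_eq : Tendsto Rp atTop atTop := by
  refine tendsto_atTop_mono' _ ?_
    (tendsto_sqrt_atTop.comp (tendsto_log_atTop.const_mul_atTop two_pos))
  filter_upwards [eventually_gt_atTop 1] with x hx
  obtain ⟨h₁, hK⟩ := hRp x hx
  rw [Function.comp_apply, sqrt_le_left (zero_le_one.trans h₁.le)]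
  have := two_log_K_le h₁.le
  rw [hK] at this
  linarith

include hRm in
lemma tendsto_integral_inv_one_sub_sq :
    Tendsto (fun c : ℝ => ∫ ψ in (π / 3)..(2 * π / 3), (1 - Rm (c * sin ψ) ^ 2)⁻¹) atTop
      (𝓝 (π / 3)) := by
  have hanti : AntitoneOn (fun x => (1 - Rm x ^ 2)⁻¹) (Ioi 1) := by
    intro x hx y hy hxy
    obtain ⟨hx₀, hx₁, -⟩ := hRm x hx
    have hy₀ := (hRm y hy).1
    have := antitoneOn_of_K_eq hRm hx hy hxy
    exact inv_anti₀ (by nlinarith) (by nlinarith)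
  have hlim : Tendsto (fun x => (1 - Rm x ^ 2)⁻¹) atTop (𝓝 1) := by
    simpa using (((tendsto_nhds_zero_of_K_eq hRm).pow 2).const_sub 1).inv₀ (by norm_num)
  simpa using tendsto_integral_comp_mul_sin hanti hlim

include hRp in
lemma tendsto_integral_inv_sq_sub_one :
    Tendsto (fun c : ℝ => ∫ ψ in (π / 3)..(2 * π / 3), (Rp (c * sin ψ) ^ 2 - 1)⁻¹) atTop
      (𝓝 0) := by
  have hanti : AntitoneOn (fun x => (Rp x ^ 2 - 1)⁻¹) (Ioi 1) := by
    intro x hx y hy hxy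
    have hx₁ := (hRp x hx).1
    have := monotoneOn_of_K_eq hRp hx hy hxy
    exact inv_anti₀ (by nlinarith) (by nlinarith)
  have hlim : Tendsto (fun x => (Rp x ^ 2 - 1)⁻¹) atTop (𝓝 0) :=
    tendsto_inv_atTop_zero.comp <| tendsto_atTop_add_const_right _ _ <|
      (tendsto_pow_atTop two_ne_zero).comp (tendsto_atTop_of_K_eq hRp)
  simpa using tendsto_integral_comp_mul_sin hanti hlim

include hRm hRp in
lemma tendsto_integral_angleDensity :
    Tendsto (fun c : ℝ => ∫ R in Rm (√3 / 2 * c)..Rp (√3 / 2 * c), angleDensity c R) atTop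
      (𝓝 (π / 3)) := by
  have ht : Tendsto (fun c : ℝ => √3 / 2 * c) atTop atTop :=
    tendsto_id.const_mul_atTop (by positivity)
  have hbranches : ∀ᶠ c in atTop,
      (0 < Rm (√3 / 2 * c) ∧ Rm (√3 / 2 * c) < 1 ∧ K (Rm (√3 / 2 * c)) = √3 / 2 * c) ∧
        1 < Rp (√3 / 2 * c) ∧ K (Rp (√3 / 2 * c)) = √3 / 2 * c :=
    (ht.eventually_gt_atTop 1).mono fun c hc => ⟨hRm _ hc, hRp _ hc⟩
  refine tendsto_order.2 ⟨fun b hb => ?_, fun b hb => ?_⟩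
  · have hlim : Tendsto (fun c : ℝ => π / 3 - arcsin c⁻¹) atTop (𝓝 (π / 3)) := by
      simpa using tendsto_const_nhds.sub
        ((continuous_arcsin.tendsto 0).comp tendsto_inv_atTop_zero)
    filter_upwards [hlim.eventually (lt_mem_nhds hb), hbranches]
      with c hc ⟨⟨hρ, hρ₁, hKρ⟩, hP₁, hKP⟩
    exact hc.trans_le (pi_div_three_sub_arcsin_inv_le_integral hρ hKρ hKP hρ₁.le hP₁.le)
  · have hδ : 0 < (b - π / 3) / 2 := by linarith
    obtain ⟨r₀, r₁, ⟨hr₀pos, hr₀₁⟩, hr₁₁, hr⟩ := exists_inv_one_sub_sq_add_inv_sq_sub_one_lt hδ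
    have hmid : Tendsto (fun c : ℝ => (r₁ - r₀) * (2 * max (K r₀) (K r₁) / (r₀ * c))) atTop
        (𝓝 0) := by
      simpa using (tendsto_const_nhds.div_atTop
        (tendsto_id.const_mul_atTop hr₀pos)).const_mul (r₁ - r₀)
    filter_upwards [hbranches, hmid.eventually (gt_mem_nhds hδ),
      ((tendsto_nhds_zero_of_K_eq hRm).comp ht).eventually (gt_mem_nhds hr₀pos),
      ((tendsto_atTop_of_K_eq hRp).comp ht).eventually_ge_atTop r₁]
      with c ⟨⟨hρ, _, hKρ⟩, _, hKP⟩ hc hρr₀ hr₁P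
    linarith [integral_angleDensity_le hρ hKρ hKP hρr₀.le hr₀₁ hr₁₁ hr₁P]

end Branches

theorem stmt_3 (Rm Rp : ℝ → ℝ)
    (hRm : ∀ x : ℝ, 1 < x → 0 < Rm x ∧ Rm x < 1 ∧ K (Rm x) = x)
    (hRp : ∀ x : ℝ, 1 < x → 1 < Rp x ∧ K (Rp x) = x) :
    Tendsto (fun c : ℝ => ∫ ψ in (π / 3)..(2 * π / 3),
        (1 - (Rm (c * Real.sin ψ)) ^ 2)⁻¹) atTop (nhds (π / 3)) ∧
    Tendsto (fun c : ℝ => ∫ R in (Rm (Real.sqrt 3 / 2 * c))..(Rp (Real.sqrt 3 / 2 * c)),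
        K R / (R * Real.sqrt (c ^ 2 - (K R) ^ 2))) atTop (nhds (π / 3)) ∧
    Tendsto (fun c : ℝ => ∫ ψ in (π / 3)..(2 * π / 3),
        ((Rp (c * Real.sin ψ)) ^ 2 - 1)⁻¹) atTop (nhds 0) :=
  ⟨tendsto_integral_inv_one_sub_sq hRm, tendsto_integral_angleDensity hRm hRp,
    tendsto_integral_inv_sq_sub_one hRp⟩
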